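/- arXiv:2510.24967 — 4 statements merged into one kernel-verified Lean document; each statement's English description precedes it below -/
import Mathlib

section
/- Let f : ℝⁿ → ℝ be twice continuously differentiable, μ-strongly convex with μ > 0, and with L-Lipschitz Hessian, L > 0. Let R ∈ ℝ^{p×n} have full row rank p ≤ n, P := Rᵀ, and suppose all singular values of P lie in [ω, ξ] with 0 < ω ≤ ξ. If x⁺ := x − P(R∇²f(x)P)⁻¹R∇f(x) is the coarse step at x ∈ ℝⁿ, then ‖R∇f(x⁺)‖ ≤ (Lξ³/(2μ²ω⁴)) ‖R∇f(x)‖². -/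
/-!
Write `g = ∇f`, `H = ∇²f(x)` and `d = P (R H P)⁻¹ R g(x)`, so that `x⁺ = x - d`. Since
`R H P (R H P)⁻¹ = 1`, the coarse step solves the reduced Newton equation `R H d = R g(x)`, hence
`R g(x⁺) = R (g(x - d) - g(x) + H d)` is `R` applied to a Taylor remainder, which the Lipschitz
Hessian bounds by `L ‖d‖² / 2`. The singular values give `‖R‖ = ‖P‖ ≤ ξ` and, in the Loewner
order, `R H P ⪰ μ R P ⪰ μ ω² 1`, so `‖d‖ ≤ ξ ‖R g(x)‖ / (μ ω²)`.
-/

open Matrix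

noncomputable section

/-- The spectral (`ℓ²`-operator) norm of a real matrix, i.e. the operator norm of the
induced linear map between Euclidean spaces. -/
def Matrix.specNorm {m n : ℕ} (A : Matrix (Fin m) (Fin n) ℝ) : ℝ :=
  ‖LinearMap.toContinuousLinearMap (Matrix.toEuclideanLin A)‖

/-- The `i`-th singular value of `P := Rᵀ`, i.e. the square root of the `i`-th eigenvalue of
the positive semidefinite matrix `PᴴP = R Rᴴ`. -/
def Matrix.singularValueT {p n : ℕ} (R : Matrix (Fin p) (Fin n) ℝ) (i : Fin p) : ℝ :=
  Real.sqrt ((Matrix.isHermitian_mul_conjTranspose_self R).eigenvalues i)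

open scoped RealInnerProductSpace MatrixOrder

theorem norm_sub_sub_fderiv_le_of_lipschitz_fderiv {E F : Type*}
    [NormedAddCommGroup E] [NormedSpace ℝ E] [NormedAddCommGroup F] [NormedSpace ℝ F]
    {g : E → F} {g' : E → E →L[ℝ] F} {L : ℝ} (hg : ∀ y, HasFDerivAt g (g' y) y)
    (hLip : ∀ y z, ‖g' y - g' z‖ ≤ L * ‖y - z‖) (x d : E) :
    ‖g (x + d) - g x - g' x d‖ ≤ L / 2 * ‖d‖ ^ 2 := by
  let φ : ℝ → F := fun t => g (x + t • d) - g x - t • g' x d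
  have hφ : ∀ t, HasDerivAt φ ((g' (x + t • d) - g' x) d) t := by
    intro t
    have hline : HasDerivAt (fun s : ℝ => x + s • d) d t := by
      simpa using ((hasDerivAt_id t).smul_const d).const_add x
    have := (((hg _).comp_hasDerivAt t hline).sub_const (g x)).sub
      ((hasDerivAt_id t).smul_const (g' x d))
    rwa [one_smul, ← _root_.sub_apply] at this
  have hB : ∀ t, HasDerivAt (fun t : ℝ => L / 2 * ‖d‖ ^ 2 * t ^ 2) (L * ‖d‖ ^ 2 * t) t := by
    intro t
    refine ((hasDerivAt_pow 2 t).const_mul (L / 2 * ‖d‖ ^ 2)).congr_deriv ?_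
    norm_num
    ring
  have bound : ∀ t ∈ Set.Ico (0 : ℝ) 1, ‖(g' (x + t • d) - g' x) d‖ ≤ L * ‖d‖ ^ 2 * t := by
    rintro t ⟨ht0, -⟩
    calc ‖(g' (x + t • d) - g' x) d‖ ≤ ‖g' (x + t • d) - g' x‖ * ‖d‖ :=
          (g' (x + t • d) - g' x).le_opNorm d
      _ ≤ L * ‖t • d‖ * ‖d‖ := by
          gcongr
          simpa using hLip (x + t • d) x
      _ = L * ‖d‖ ^ 2 * t := by rw [norm_smul, Real.norm_of_nonneg ht0]; ring
  have := image_norm_le_of_norm_deriv_right_le_deriv_boundary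
    (fun t _ => (hφ t).continuousAt.continuousWithinAt) (fun t _ => (hφ t).hasDerivWithinAt)
    (by simp [φ]) hB bound (Set.right_mem_Icc.2 zero_le_one)
  simpa [φ] using this

namespace Matrix

theorem toEuclideanLin_mul_apply {ι κ ν : Type*} [Fintype ι] [DecidableEq ι] [Fintype ν]
    [DecidableEq ν] (A : Matrix κ ι ℝ) (B : Matrix ι ν ℝ) (v : EuclideanSpace ℝ ν) :
    toEuclideanLin (A * B) v = toEuclideanLin A (toEuclideanLin B v) := by
  rw [toLpLin_mul 2 2 2]
  rfl

theorem mul_mul_mul_nonsing_inv_mul_cancel {ι κ α : Type*} [Fintype ι] [Fintype κ]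
    [DecidableEq κ] [CommRing α] (R : Matrix κ ι α) (H : Matrix ι ι α) (P : Matrix ι κ α)
    (h : IsUnit (R * H * P).det) : R * H * (P * (R * H * P)⁻¹ * R) = R := by
  rw [← Matrix.mul_assoc, ← Matrix.mul_assoc, mul_nonsing_inv _ h, Matrix.one_mul]

theorem PosSemidef.posDef_of_sub_smul_one {ι : Type*} [DecidableEq ι] {A : Matrix ι ι ℝ}
    {c : ℝ} (hc : 0 < c) (hA : (A - c • 1).PosSemidef) : A.PosDef := by
  simpa using PosDef.posSemidef_add hA (PosDef.one.smul hc)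

section

variable {ι κ : Type*} [Fintype ι] [DecidableEq ι] [Fintype κ] [DecidableEq κ]

theorem inner_toEuclideanLin_transpose (A : Matrix κ ι ℝ) (v : EuclideanSpace ℝ κ)
    (w : EuclideanSpace ℝ ι) :
    ⟪toEuclideanLin Aᵀ v, w⟫ = ⟪v, toEuclideanLin A w⟫ := by
  rw [← conjTranspose_eq_transpose_of_trivial, toEuclideanLin_conjTranspose_eq_adjoint,
    LinearMap.adjoint_inner_left]

theorem inner_toEuclideanLin_smul_one (c : ℝ) (v : EuclideanSpace ℝ ι) :
    ⟪v, toEuclideanLin (c • 1 : Matrix ι ι ℝ) v⟫ = c * ‖v‖ ^ 2 := by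
  rw [map_smul, toLpLin_one, LinearMap.smul_apply, real_inner_smul_right, LinearMap.id_apply,
    real_inner_self_eq_norm_sq]

theorem PosSemidef.mul_norm_sq_le_inner {A : Matrix ι ι ℝ} {c : ℝ} (h : (A - c • 1).PosSemidef)
    (v : EuclideanSpace ℝ ι) : c * ‖v‖ ^ 2 ≤ ⟪v, toEuclideanLin A v⟫ := by
  have := (isPositive_toEuclideanLin_iff.2 h).inner_nonneg_right v
  rw [map_sub, LinearMap.sub_apply, inner_sub_right, inner_toEuclideanLin_smul_one] at this
  linarith

theorem PosSemidef.inner_le_mul_norm_sq {A : Matrix ι ι ℝ} {c : ℝ} (h : (c • 1 - A).PosSemidef)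
    (v : EuclideanSpace ℝ ι) : ⟪v, toEuclideanLin A v⟫ ≤ c * ‖v‖ ^ 2 := by
  have := (isPositive_toEuclideanLin_iff.2 h).inner_nonneg_right v
  rw [map_sub, LinearMap.sub_apply, inner_sub_right, inner_toEuclideanLin_smul_one] at this
  linarith

theorem IsHermitian.posSemidef_sub_smul_one {A : Matrix ι ι ℝ} (hA : A.IsHermitian) {c : ℝ}
    (h : ∀ i, c ≤ hA.eigenvalues i) : (A - c • 1).PosSemidef := by
  have : algebraMap ℝ _ c ≤ A := by
    rw [algebraMap_le_iff_le_spectrum hA.isSelfAdjoint, hA.spectrum_real_eq_range_eigenvalues]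
    rintro _ ⟨i, rfl⟩
    exact h i
  rwa [Algebra.algebraMap_eq_smul_one] at this

theorem IsHermitian.posSemidef_smul_one_sub {A : Matrix ι ι ℝ} (hA : A.IsHermitian) {c : ℝ}
    (h : ∀ i, hA.eigenvalues i ≤ c) : (c • 1 - A).PosSemidef := by
  have : A ≤ algebraMap ℝ _ c := by
    rw [le_algebraMap_iff_spectrum_le hA.isSelfAdjoint, hA.spectrum_real_eq_range_eigenvalues]
    rintro _ ⟨i, rfl⟩
    exact h i
  rwa [Algebra.algebraMap_eq_smul_one] at this

theorem PosSemidef.mul_mul_conjTranspose_sub_smul_one {H : Matrix ι ι ℝ} {μ : ℝ}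
    (hH : (H - μ • 1).PosSemidef) (hμ : 0 ≤ μ) {R : Matrix κ ι ℝ} {c : ℝ}
    (hR : (R * Rᴴ - c • 1).PosSemidef) : (R * H * Rᴴ - (μ * c) • 1).PosSemidef := by
  convert (hH.mul_mul_conjTranspose_same R).add (hR.smul hμ) using 1
  simp only [Matrix.mul_sub, Matrix.sub_mul, Matrix.mul_smul, Matrix.smul_mul, Matrix.mul_one,
    smul_sub, mul_smul]
  abel

theorem norm_toEuclideanLin_inv_le {A : Matrix ι ι ℝ} {c : ℝ} (hc : 0 < c)
    (hA : (A - c • 1).PosSemidef) (w : EuclideanSpace ℝ ι) :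
    ‖toEuclideanLin A⁻¹ w‖ ≤ c⁻¹ * ‖w‖ := by
  set u := toEuclideanLin A⁻¹ w
  have hu : toEuclideanLin A u = w := by
    rw [← toEuclideanLin_mul_apply,
      mul_nonsing_inv _ ((isUnit_iff_isUnit_det A).1 (hA.posDef_of_sub_smul_one hc).isUnit)]
    simp
  have := (hA.mul_norm_sq_le_inner u).trans (real_inner_le_norm u _)
  rw [hu] at this
  rw [le_inv_mul_iff₀ hc]
  nlinarith [norm_nonneg u, norm_nonneg w]

theorem norm_toEuclideanLin_transpose_le {R : Matrix κ ι ℝ} {ξ : ℝ} (hξ : 0 ≤ ξ)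
    (hR : (ξ ^ 2 • 1 - R * Rᴴ).PosSemidef) (v : EuclideanSpace ℝ κ) :
    ‖toEuclideanLin Rᵀ v‖ ≤ ξ * ‖v‖ := by
  have := hR.inner_le_mul_norm_sq v
  rw [toEuclideanLin_mul_apply, conjTranspose_eq_transpose_of_trivial,
    ← inner_toEuclideanLin_transpose, real_inner_self_eq_norm_sq, ← mul_pow] at this
  exact (pow_le_pow_iff_left₀ (norm_nonneg _) (by positivity) two_ne_zero).1 this

theorem norm_toEuclideanLin_le_of_transpose {R : Matrix κ ι ℝ} {ξ : ℝ} (hξ : 0 ≤ ξ)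
    (hR : ∀ v, ‖toEuclideanLin Rᵀ v‖ ≤ ξ * ‖v‖) (w : EuclideanSpace ℝ ι) :
    ‖toEuclideanLin R w‖ ≤ ξ * ‖w‖ := by
  have : ‖toEuclideanLin R w‖ ^ 2 ≤ ξ * ‖toEuclideanLin R w‖ * ‖w‖ :=
    calc ‖toEuclideanLin R w‖ ^ 2 = ⟪toEuclideanLin Rᵀ (toEuclideanLin R w), w⟫ := by
          rw [inner_toEuclideanLin_transpose, real_inner_self_eq_norm_sq]
      _ ≤ ‖toEuclideanLin Rᵀ (toEuclideanLin R w)‖ * ‖w‖ := real_inner_le_norm _ _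
      _ ≤ ξ * ‖toEuclideanLin R w‖ * ‖w‖ := by gcongr; exact hR _
  nlinarith [norm_nonneg (toEuclideanLin R w), norm_nonneg w, mul_nonneg hξ (norm_nonneg w)]

end

variable {p n : ℕ} (R : Matrix (Fin p) (Fin n) ℝ)

theorem sq_singularValueT (i : Fin p) :
    R.singularValueT i ^ 2 = (isHermitian_mul_conjTranspose_self R).eigenvalues i :=
  Real.sq_sqrt (eigenvalues_self_mul_conjTranspose_nonneg R i)

theorem posSemidef_mul_conjTranspose_sub_smul_one {ω : ℝ} (hω : 0 ≤ ω)
    (h : ∀ i, ω ≤ R.singularValueT i) : (R * Rᴴ - ω ^ 2 • 1).PosSemidef :=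
  (isHermitian_mul_conjTranspose_self R).posSemidef_sub_smul_one fun i => by
    rw [← sq_singularValueT]
    exact pow_le_pow_left₀ hω (h i) 2

theorem posSemidef_smul_one_sub_mul_conjTranspose {ξ : ℝ} (h : ∀ i, R.singularValueT i ≤ ξ) :
    (ξ ^ 2 • 1 - R * Rᴴ).PosSemidef :=
  (isHermitian_mul_conjTranspose_self R).posSemidef_smul_one_sub fun i => by
    rw [← sq_singularValueT]
    exact pow_le_pow_left₀ (Real.sqrt_nonneg _) (h i) 2

end Matrix

theorem norm_reduced_grad_coarse_step_le_general
    {n p : ℕ}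
    (f : EuclideanSpace ℝ (Fin n) → ℝ)
    (Hess : EuclideanSpace ℝ (Fin n) → Matrix (Fin n) (Fin n) ℝ)
    (hHess : ∀ y, HasFDerivAt (gradient f) (Matrix.toEuclideanCLM (𝕜 := ℝ) (Hess y)) y)
    (μ L : ℝ) (hμ : 0 < μ) (hL : 0 < L)
    (hsc : ∀ y, (Hess y - μ • (1 : Matrix (Fin n) (Fin n) ℝ)).PosSemidef)
    (hLip : ∀ y z, Matrix.specNorm (Hess y - Hess z) ≤ L * ‖y - z‖)
    (R : Matrix (Fin p) (Fin n) ℝ)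
    (ω ξ : ℝ) (hω : 0 < ω) (hωξ : ω ≤ ξ)
    (hsv : ∀ i, R.singularValueT i ∈ Set.Icc ω ξ)
    (x xp : EuclideanSpace ℝ (Fin n))
    (hxp : xp = x - Matrix.toEuclideanLin (Rᵀ * (R * Hess x * Rᵀ)⁻¹ * R) (gradient f x)) :
    ‖Matrix.toEuclideanLin R (gradient f xp)‖ ≤
      L * ξ ^ 3 / (2 * μ ^ 2 * ω ^ 4) * ‖Matrix.toEuclideanLin R (gradient f x)‖ ^ 2 := by
  have hξ : 0 ≤ ξ := hω.le.trans hωξ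
  have hRt := norm_toEuclideanLin_transpose_le hξ
    (posSemidef_smul_one_sub_mul_conjTranspose R fun i => (hsv i).2)
  have hR := norm_toEuclideanLin_le_of_transpose hξ hRt
  have hA : (R * Hess x * Rᵀ - (μ * ω ^ 2) • 1).PosSemidef := by
    simpa using (hsc x).mul_mul_conjTranspose_sub_smul_one hμ.le
      (posSemidef_mul_conjTranspose_sub_smul_one R hω.le fun i => (hsv i).1)
  set d := toEuclideanLin (Rᵀ * (R * Hess x * Rᵀ)⁻¹ * R) (gradient f x)
  have hd : ‖d‖ ≤ ξ * ((μ * ω ^ 2)⁻¹ * ‖toEuclideanLin R (gradient f x)‖) := by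
    simp only [d, toEuclideanLin_mul_apply]
    exact (hRt _).trans (by gcongr; exact norm_toEuclideanLin_inv_le (by positivity) hA _)
  have hNewton : toEuclideanLin R (toEuclideanCLM (𝕜 := ℝ) (Hess x) d) =
      toEuclideanLin R (gradient f x) := by
    change toEuclideanLin R (toEuclideanLin (Hess x) d) = _
    rw [← toEuclideanLin_mul_apply, ← toEuclideanLin_mul_apply, mul_mul_mul_nonsing_inv_mul_cancel]
    exact (isUnit_iff_isUnit_det _).1 (hA.posDef_of_sub_smul_one (by positivity)).isUnit
  have hTaylor := norm_sub_sub_fderiv_le_of_lipschitz_fderiv hHess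
    (fun y z => by rw [← map_sub]; exact hLip y z) x (-d)
  calc ‖toEuclideanLin R (gradient f xp)‖
      = ‖toEuclideanLin R (gradient f (x + -d) - gradient f x
          - toEuclideanCLM (𝕜 := ℝ) (Hess x) (-d))‖ := by
        rw [hxp, ← sub_eq_add_neg, map_neg, map_sub, map_sub, map_neg, hNewton]
        abel_nf
    _ ≤ ξ * (L / 2 * ‖d‖ ^ 2) := (hR _).trans (by rw [← norm_neg d]; gcongr)
    _ ≤ ξ * (L / 2 * (ξ * ((μ * ω ^ 2)⁻¹ * ‖toEuclideanLin R (gradient f x)‖)) ^ 2) := by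
        gcongr
    _ = L * ξ ^ 3 / (2 * μ ^ 2 * ω ^ 4) * ‖toEuclideanLin R (gradient f x)‖ ^ 2 := by
        field_simp

/-- One coarse step of the multilevel Newton method contracts the reduced
gradient quadratically: `‖R∇f(x⁺)‖ ≤ (Lξ³/(2μ²ω⁴)) ‖R∇f(x)‖²`. -/
theorem norm_reduced_grad_coarse_step_le
    {n p : ℕ} (hp : p ≤ n)
    (f : EuclideanSpace ℝ (Fin n) → ℝ)
    (hf : ContDiff ℝ 2 f)
    (Hess : EuclideanSpace ℝ (Fin n) → Matrix (Fin n) (Fin n) ℝ)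
    (hHess : ∀ y, HasFDerivAt (gradient f) (Matrix.toEuclideanCLM (𝕜 := ℝ) (Hess y)) y)
    (μ L : ℝ) (hμ : 0 < μ) (hL : 0 < L)
    (hsc : ∀ y, (Hess y - μ • (1 : Matrix (Fin n) (Fin n) ℝ)).PosSemidef)
    (hLip : ∀ y z, Matrix.specNorm (Hess y - Hess z) ≤ L * ‖y - z‖)
    (R : Matrix (Fin p) (Fin n) ℝ) (hR : R.rank = p)
    (ω ξ : ℝ) (hω : 0 < ω) (hωξ : ω ≤ ξ)
    (hsv : ∀ i, R.singularValueT i ∈ Set.Icc ω ξ)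
    (x xp : EuclideanSpace ℝ (Fin n))
    (hxp : xp = x - Matrix.toEuclideanLin (Rᵀ * (R * Hess x * Rᵀ)⁻¹ * R) (gradient f x)) :
    ‖Matrix.toEuclideanLin R (gradient f xp)‖ ≤
      L * ξ ^ 3 / (2 * μ ^ 2 * ω ^ 4) * ‖Matrix.toEuclideanLin R (gradient f x)‖ ^ 2 :=
  norm_reduced_grad_coarse_step_le_general f Hess hHess μ L hμ hL hsc hLip R ω ξ hω hωξ hsv x xp hxp

end
end

section
/- Let H, G ∈ ℝ^{n×n} be symmetric positive definite matrices and let a, b ∈ ℝ be such that aH ⪯ G − H ⪯ bH in the Loewner (positive semidefinite) order. Then (G − H) H⁻¹ (G − H) ⪯ c² H, where c := max{|a|, |b|}. -/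
/-!
With `E = G - H` and `c = max |a| |b|` the hypotheses give `-c H ⪯ E ⪯ c H`. For `c > 0` the
identity
  `(c + E H⁻¹)(c H - E)(c + H⁻¹ E) + (c - E H⁻¹)(c H + E)(c - H⁻¹ E) = 2c (c² H - E H⁻¹ E)`
exhibits `2c (c² H - E H⁻¹ E)` as a sum of two congruences of positive semidefinite matrices;
for `c = 0` the sandwich forces `E = 0`.
-/

open Matrix
open scoped MatrixOrder ComplexOrder

theorem mul_mul_add_mul_mul_eq_two_smul_sq_smul_sub {R A : Type*} [CommRing R] [Ring A]
    [Algebra R A] (c : R) {h h' e : A} (hl : h' * h = 1) (hr : h * h' = 1) :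
    (c • 1 + e * h') * (c • h - e) * (c • 1 + h' * e)
      + (c • 1 - e * h') * (c • h + e) * (c • 1 - h' * e)
      = (2 * c) • (c ^ 2 • h - e * h' * e) := by
  have hr' (x : A) : h * (h' * x) = x := by rw [← mul_assoc, hr, one_mul]
  simp only [add_mul, mul_add, sub_mul, mul_sub, smul_mul_assoc, mul_smul_comm, one_mul, mul_one,
    mul_assoc, hl, hr']
  module

namespace Matrix

variable {n 𝕜 : Type*} [RCLike 𝕜]

lemma PosSemidef.smul_le_smul_of_le {H : Matrix n n 𝕜} (hH : H.PosSemidef) {s t : ℝ}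
    (hst : s ≤ t) : s • H ≤ t • H :=
  le_iff.mpr (by simpa only [sub_smul] using hH.smul (sub_nonneg.mpr hst))

variable [Fintype n] [DecidableEq n]

lemma mul_nonsing_inv_mul_le_sq_smul {H E : Matrix n n 𝕜} {c : ℝ} (hH : H.IsHermitian)
    (hdet : IsUnit H.det) (hc : 0 ≤ c) (hlow : -(c • H) ≤ E) (hup : E ≤ c • H) :
    E * H⁻¹ * E ≤ c ^ 2 • H := by
  rcases hc.eq_or_lt with rfl | hc
  · obtain rfl : E = 0 := le_antisymm (by simpa using hup) (by simpa using hlow)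
    simp
  have hE : E.IsHermitian := by
    simpa using (hH.smul (IsSelfAdjoint.all c)).sub (le_iff.mp hup).isHermitian
  have hplus : (c • H + E).PosSemidef := by simpa [add_comm] using le_iff.mp hlow
  have hminus : (c • H - E).PosSemidef := le_iff.mp hup
  have hsum := (hminus.conjTranspose_mul_mul_same (c • 1 + H⁻¹ * E)).add
    (hplus.conjTranspose_mul_mul_same (c • 1 - H⁻¹ * E))
  simp only [conjTranspose_add, conjTranspose_sub, conjTranspose_smul, conjTranspose_one,
    conjTranspose_mul, hE.eq, hH.inv.eq, star_trivial, mul_mul_add_mul_mul_eq_two_smul_sq_smul_sub c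
      (nonsing_inv_mul H hdet) (mul_nonsing_inv H hdet)] at hsum
  have h2c : (2 * c)⁻¹ * (2 * c) = 1 := inv_mul_cancel₀ (by positivity)
  rw [le_iff]
  simpa only [smul_smul, h2c, one_smul] using
    hsum.smul (inv_nonneg.mpr (by positivity : (0 : ℝ) ≤ 2 * c))

end Matrix

theorem sandwich_quadratic_form_bound_general
    {n : ℕ} (H G : Matrix (Fin n) (Fin n) ℝ)
    (hH : H.PosDef) (a b : ℝ)
    (h1 : ((G - H) - a • H).PosSemidef)
    (h2 : (b • H - (G - H)).PosSemidef) :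
    ((max |a| |b|) ^ 2 • H - (G - H) * H⁻¹ * (G - H)).PosSemidef := by
  set c := max |a| |b|
  have hlow : -(c • H) ≤ G - H := calc
    -(c • H) = (-c) • H := (neg_smul c H).symm
    _ ≤ a • H := hH.posSemidef.smul_le_smul_of_le (neg_le_of_abs_le (le_max_left _ _))
    _ ≤ G - H := le_iff.mpr h1
  have hup : G - H ≤ c • H := calc
    G - H ≤ b • H := le_iff.mpr h2
    _ ≤ c • H := hH.posSemidef.smul_le_smul_of_le (le_of_abs_le (le_max_right _ _))
  exact le_iff.mp <| mul_nonsing_inv_mul_le_sq_smul hH.isHermitian hH.det_pos.ne'.isUnit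
    ((abs_nonneg a).trans (le_max_left _ _)) hlow hup

/-- Lemma 4.5. If `H, G` are symmetric positive definite and
`aH ⪯ G − H ⪯ bH` in the Loewner order, then `(G − H)H⁻¹(G − H) ⪯ c²H` with
`c = max{|a|, |b|}`. -/
theorem sandwich_quadratic_form_bound
    {n : ℕ} (H G : Matrix (Fin n) (Fin n) ℝ)
    (hH : H.PosDef) (hG : G.PosDef) (a b : ℝ)
    (h1 : ((G - H) - a • H).PosSemidef)
    (h2 : (b • H - (G - H)).PosSemidef) :
    ((max |a| |b|) ^ 2 • H - (G - H) * H⁻¹ * (G - H)).PosSemidef :=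
  sandwich_quadratic_form_bound_general H G hH a b h1 h2
end

section
/- Let A ∈ ℝ^{n×n} be symmetric positive definite and let R ∈ ℝ^{p×n} have full row rank p ≤ n. Then for every v ∈ ℝⁿ, vᵀRᵀ(RARᵀ)⁻¹Rv ≤ vᵀA⁻¹v; equivalently, Rᵀ(RARᵀ)⁻¹R ⪯ A⁻¹ in the Loewner order. In particular, for a twice continuously differentiable function f : ℝⁿ → ℝ with positive definite Hessian, the approximate decrement ((R∇f(x))ᵀ(R∇²f(x)Rᵀ)⁻¹(R∇f(x)))^{1/2} never exceeds the Newton decrement (∇f(x)ᵀ∇²f(x)⁻¹∇f(x))^{1/2}. -/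
/-!
Since `R` has full row rank, `M = R A Rᵀ` is positive definite, and `P = Rᵀ M⁻¹ R` satisfies
`P A P = P`. Expanding, `C = A⁻¹ - P` then satisfies `C A C = C`, so the symmetric matrix `C`
equals `Cᵀ A C` and is positive semidefinite. The decrement inequality is the quadratic form of
`C` evaluated at the gradient, with `A` the Hessian.
-/

open Matrix

namespace Matrix

theorem vecMul_injective_of_rank_eq_card {K m n : Type*} [Field K] [Fintype m] [Fintype n]
    {R : Matrix m n K} (hR : R.rank = Fintype.card m) : Function.Injective R.vecMul := by
  rw [vecMul_injective_iff, linearIndependent_iff_card_eq_finrank_span, Set.finrank,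
    ← rank_eq_finrank_span_row, hR]

theorem PosSemidef.of_mul_mul_self {R n : Type*} [Ring R] [PartialOrder R] [StarRing R]
    [Fintype n] {A C : Matrix n n R} (hA : A.PosSemidef) (hC : C.IsHermitian)
    (h : C * A * C = C) : C.PosSemidef := by
  simpa only [hC.eq, h] using hA.conjTranspose_mul_mul_same C

theorem mul_nonsing_inv_mul_mul_mul_nonsing_inv_mul {α m n : Type*} [CommRing α] [Fintype m]
    [Fintype n] [DecidableEq m] {A : Matrix n n α} {R : Matrix m n α} {S : Matrix n m α}
    (h : IsUnit (R * A * S).det) :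
    S * (R * A * S)⁻¹ * R * A * (S * (R * A * S)⁻¹ * R) = S * (R * A * S)⁻¹ * R := by
  calc S * (R * A * S)⁻¹ * R * A * (S * (R * A * S)⁻¹ * R)
      = S * ((R * A * S)⁻¹ * (R * A * S)) * (R * A * S)⁻¹ * R := by
        simp only [Matrix.mul_assoc]
    _ = S * (R * A * S)⁻¹ * R := by rw [nonsing_inv_mul _ h, Matrix.mul_one]

section Field

variable {K m n : Type*} [Field K] [PartialOrder K] [StarRing K]
  [Fintype m] [Fintype n] [DecidableEq m] [DecidableEq n]

theorem PosDef.posSemidef_inv_sub {A P : Matrix n n K} (hA : A.PosDef) (hP : P.IsHermitian)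
    (h : P * A * P = P) : (A⁻¹ - P).PosSemidef := by
  have hdet : IsUnit A.det := (isUnit_iff_isUnit_det A).mp hA.isUnit
  refine hA.posSemidef.of_mul_mul_self (hA.inv.isHermitian.sub hP) ?_
  simp only [Matrix.sub_mul, Matrix.mul_sub, nonsing_inv_mul A hdet, Matrix.one_mul, h,
    Matrix.mul_assoc, mul_nonsing_inv A hdet, Matrix.mul_one]
  abel

theorem PosDef.posSemidef_inv_sub_conjTranspose_mul_inv_mul {A : Matrix n n K} (hA : A.PosDef)
    {R : Matrix m n K} (hR : Function.Injective R.vecMul) :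
    (A⁻¹ - Rᴴ * (R * A * Rᴴ)⁻¹ * R).PosSemidef := by
  have hM := hA.mul_mul_conjTranspose_same hR
  refine hA.posSemidef_inv_sub ?_ (mul_nonsing_inv_mul_mul_mul_nonsing_inv_mul ?_)
  · simpa only [conjTranspose_conjTranspose] using
      isHermitian_conjTranspose_mul_mul R hM.inv.isHermitian
  · exact (isUnit_iff_isUnit_det _).mp hM.isUnit

theorem PosDef.dotProduct_mulVec_inv_mul_mul_conjTranspose_le [IsOrderedAddMonoid K]
    {A : Matrix n n K} (hA : A.PosDef)
    {R : Matrix m n K} (hR : Function.Injective R.vecMul) (v : n → K) :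
    star (R *ᵥ v) ⬝ᵥ (R * A * Rᴴ)⁻¹ *ᵥ (R *ᵥ v) ≤ star v ⬝ᵥ A⁻¹ *ᵥ v := by
  have := (hA.posSemidef_inv_sub_conjTranspose_mul_inv_mul hR).dotProduct_mulVec_nonneg v
  rwa [sub_mulVec, dotProduct_sub, sub_nonneg, ← mulVec_mulVec, ← mulVec_mulVec,
    dotProduct_mulVec, ← star_mulVec] at this

end Field

end Matrix

theorem approx_decrement_le_newton_decrement_general
    {n p : ℕ}
    (A : Matrix (Fin n) (Fin n) ℝ) (hA : A.PosDef)
    (R : Matrix (Fin p) (Fin n) ℝ) (hR : R.rank = p)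
    (f : EuclideanSpace ℝ (Fin n) → ℝ)
    (Hess : EuclideanSpace ℝ (Fin n) → Matrix (Fin n) (Fin n) ℝ)
    (hPD : ∀ y, (Hess y).PosDef)
    (x : EuclideanSpace ℝ (Fin n)) :
    (∀ v : Fin n → ℝ,
      R.mulVec v ⬝ᵥ (R * A * Rᵀ)⁻¹.mulVec (R.mulVec v) ≤ v ⬝ᵥ A⁻¹.mulVec v) ∧
    (A⁻¹ - Rᵀ * (R * A * Rᵀ)⁻¹ * R).PosSemidef ∧
    Real.sqrt (R.mulVec (fun i => gradient f x i) ⬝ᵥ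
        (R * Hess x * Rᵀ)⁻¹.mulVec (R.mulVec fun i => gradient f x i)) ≤
      Real.sqrt ((fun i => gradient f x i) ⬝ᵥ (Hess x)⁻¹.mulVec fun i => gradient f x i) := by
  have hR' : Function.Injective R.vecMul :=
    vecMul_injective_of_rank_eq_card (by rw [hR, Fintype.card_fin])
  have quad {B : Matrix (Fin n) (Fin n) ℝ} (hB : B.PosDef) (v : Fin n → ℝ) :
      R *ᵥ v ⬝ᵥ (R * B * Rᵀ)⁻¹ *ᵥ (R *ᵥ v) ≤ v ⬝ᵥ B⁻¹ *ᵥ v := by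
    simpa only [star_trivial, conjTranspose_eq_transpose_of_trivial] using
      hB.dotProduct_mulVec_inv_mul_mul_conjTranspose_le hR' v
  refine ⟨quad hA, ?_, Real.sqrt_le_sqrt (quad (hPD x) _)⟩
  simpa only [conjTranspose_eq_transpose_of_trivial] using
    hA.posSemidef_inv_sub_conjTranspose_mul_inv_mul hR'

/-- For a symmetric positive definite `A` and full-row-rank `R`,
`Rᵀ(RARᵀ)⁻¹R ⪯ A⁻¹` (both pointwise as quadratic forms and in the Loewner order);
in particular the approximate decrement never exceeds the Newton decrement. -/
theorem approx_decrement_le_newton_decrement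
    {n p : ℕ} (hp : p ≤ n)
    (A : Matrix (Fin n) (Fin n) ℝ) (hA : A.PosDef)
    (R : Matrix (Fin p) (Fin n) ℝ) (hR : R.rank = p)
    (f : EuclideanSpace ℝ (Fin n) → ℝ) (hf : ContDiff ℝ 2 f)
    (Hess : EuclideanSpace ℝ (Fin n) → Matrix (Fin n) (Fin n) ℝ)
    (hHess : ∀ y, HasFDerivAt (gradient f) (Matrix.toEuclideanCLM (𝕜 := ℝ) (Hess y)) y)
    (hPD : ∀ y, (Hess y).PosDef)
    (x : EuclideanSpace ℝ (Fin n)) :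
    (∀ v : Fin n → ℝ,
      R.mulVec v ⬝ᵥ (R * A * Rᵀ)⁻¹.mulVec (R.mulVec v) ≤ v ⬝ᵥ A⁻¹.mulVec v) ∧
    (A⁻¹ - Rᵀ * (R * A * Rᵀ)⁻¹ * R).PosSemidef ∧
    Real.sqrt (R.mulVec (fun i => gradient f x i) ⬝ᵥ
        (R * Hess x * Rᵀ)⁻¹.mulVec (R.mulVec fun i => gradient f x i)) ≤
      Real.sqrt ((fun i => gradient f x i) ⬝ᵥ (Hess x)⁻¹.mulVec fun i => gradient f x i) :=
  approx_decrement_le_newton_decrement_general A hA R hR f Hess hPD x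
end

section
/- Let f : ℝⁿ → ℝ be twice continuously differentiable with positive definite Hessian at every point. Let R ∈ ℝ^{p×n} have full row rank p ≤ n, P := Rᵀ, and let d := −P(R∇²f(x)P)⁻¹R∇f(x) be the coarse direction at x ∈ ℝⁿ, with x⁺ := x + d. Then R∇f(x⁺) = −R(∇²f(x) − G) d, where G := ∫₀¹ ∇²f(x + t d) dt is the averaged Hessian along the segment from x to x⁺. -/
/-!
The fundamental theorem of calculus along the segment `t ↦ x + t • d` gives
`G d = ∇f(x⁺) - ∇f(x)`. Since `R` has full row rank and `∇²f(x)` is positive definite,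
`R ∇²f(x) Rᵀ` is invertible, and the coarse direction then satisfies `R ∇²f(x) d = -R ∇f(x)`.
Subtracting the two identities (after applying `R` to the first) gives the claim.
-/

open Matrix

noncomputable section

namespace Matrix

variable {m n K : Type*} [Fintype m] [Fintype n]

theorem linearIndependent_row_of_rank_eq [Field K] {M : Matrix m n K}
    (h : M.rank = Fintype.card m) : LinearIndependent K M.row := by
  rw [linearIndependent_iff_card_eq_finrank_span, ← h, rank_eq_finrank_span_row]
  rfl

theorem PosDef.mul_mul_transpose_of_rank_eq {H : Matrix n n ℝ} (hH : H.PosDef)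
    {R : Matrix m n ℝ} (hR : R.rank = Fintype.card m) : (R * H * Rᵀ).PosDef := by
  simpa [conjTranspose_eq_transpose_of_trivial] using
    hH.mul_mul_conjTranspose_same (vecMul_injective_iff.mpr (linearIndependent_row_of_rank_eq hR))

variable [DecidableEq m] [CommRing K]

def coarseDirection (R : Matrix m n K) (H : Matrix n n K) (g : n → K) : n → K :=
  -((Rᵀ * (R * H * Rᵀ)⁻¹ * R) *ᵥ g)

theorem mulVec_mulVec_coarseDirection {R : Matrix m n K} {H : Matrix n n K}
    (hA : IsUnit (R * H * Rᵀ).det) (g : n → K) :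
    R *ᵥ (H *ᵥ coarseDirection R H g) = -(R *ᵥ g) := by
  have hproj : R * H * (Rᵀ * (R * H * Rᵀ)⁻¹ * R) = R := by
    simp only [← Matrix.mul_assoc, mul_nonsing_inv _ hA, Matrix.one_mul]
  rw [coarseDirection, mulVec_neg, mulVec_neg, mulVec_mulVec, mulVec_mulVec, hproj]

end Matrix

theorem Matrix.of_intervalIntegral_mulVec_eq_sub {m n : Type*} [Fintype n]
    {φ : ℝ → m → ℝ} {M : ℝ → Matrix m n ℝ} {v : n → ℝ} (a b : ℝ)
    (hφ : ∀ t, HasDerivAt φ (M t *ᵥ v) t) (hM : Continuous M) :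
    (of fun i j => ∫ t in a..b, M t i j) *ᵥ v = φ b - φ a := by
  funext i
  have hentry : ∀ j, Continuous fun t => M t i j := fun j =>
    (continuous_apply j).comp ((continuous_apply i).comp hM)
  have hrow : Continuous fun t => (M t *ᵥ v) i :=
    (continuous_apply i).comp (hM.matrix_mulVec continuous_const)
  calc ((of fun i j => ∫ t in a..b, M t i j) *ᵥ v) i
      = ∫ t in a..b, (M t *ᵥ v) i := by
        simp only [mulVec, dotProduct, of_apply, ← intervalIntegral.integral_mul_const]
        exact (intervalIntegral.integral_finsetSum fun j _ =>
          ((hentry j).mul continuous_const).intervalIntegrable a b).symm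
    _ = φ b i - φ a i :=
        intervalIntegral.integral_eq_sub_of_hasDerivAt
          (fun t _ => hasDerivAt_pi.mp (hφ t) i) (hrow.intervalIntegrable a b)

theorem ContDiff.contDiff_gradient {F : Type*} [NormedAddCommGroup F] [InnerProductSpace ℝ F]
    [CompleteSpace F] {f : F → ℝ} {k m : WithTop ℕ∞} (hf : ContDiff ℝ k f) (hmk : m + 1 ≤ k) :
    ContDiff ℝ m (gradient f) :=
  (InnerProductSpace.toDual ℝ F).symm.contDiff.comp (hf.fderiv_right hmk)

section Euclidean

variable {n : Type*} [Fintype n] [DecidableEq n]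

theorem continuous_of_hasFDerivAt_toEuclideanCLM {g : EuclideanSpace ℝ n → EuclideanSpace ℝ n}
    {J : EuclideanSpace ℝ n → Matrix n n ℝ} (hg : ContDiff ℝ 1 g)
    (hJ : ∀ y, HasFDerivAt g (toEuclideanCLM (𝕜 := ℝ) (J y)) y) : Continuous J := by
  have hfderiv : fderiv ℝ g = fun y => toEuclideanCLM (𝕜 := ℝ) (J y) :=
    funext fun y => (hJ y).fderiv
  have hsymm : Continuous (toEuclideanCLM (n := n) (𝕜 := ℝ)).symm :=
    LinearMap.continuous_of_finiteDimensional
      (toEuclideanCLM (n := n) (𝕜 := ℝ)).symm.toAlgEquiv.toLinearMap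
  simpa [hfderiv, Function.comp_def] using hsymm.comp (hg.continuous_fderiv one_ne_zero)

def averagedJacobian (J : EuclideanSpace ℝ n → Matrix n n ℝ) (x d : EuclideanSpace ℝ n) :
    Matrix n n ℝ :=
  of fun i j => ∫ t in (0:ℝ)..1, J (x + t • d) i j

theorem averagedJacobian_mulVec {g : EuclideanSpace ℝ n → EuclideanSpace ℝ n}
    {J : EuclideanSpace ℝ n → Matrix n n ℝ}
    (hJ : ∀ y, HasFDerivAt g (toEuclideanCLM (𝕜 := ℝ) (J y)) y) (hJc : Continuous J)
    (x d : EuclideanSpace ℝ n) :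
    averagedJacobian J x d *ᵥ WithLp.ofLp d = WithLp.ofLp (g (x + d)) - WithLp.ofLp (g x) := by
  have hline : ∀ t : ℝ, HasDerivAt (fun s : ℝ => x + s • d) d t := fun t => by
    simpa using ((hasDerivAt_id t).smul_const d).const_add x
  have hφ : ∀ t : ℝ, HasDerivAt (fun s : ℝ => WithLp.ofLp (g (x + s • d)))
      (J (x + t • d) *ᵥ WithLp.ofLp d) t := fun t => by
    exact (EuclideanSpace.equiv n ℝ).hasFDerivAt.comp_hasDerivAt t
      ((hJ (x + t • d)).comp_hasDerivAt t (hline t))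
  simpa [averagedJacobian] using Matrix.of_intervalIntegral_mulVec_eq_sub 0 1 hφ
    (hJc.comp (continuous_const.add (continuous_id.smul continuous_const)))

end Euclidean

theorem reduced_gradient_taylor_identity_general
    {n p : ℕ}
    (f : EuclideanSpace ℝ (Fin n) → ℝ)
    (hf : ContDiff ℝ 2 f)
    (Hess : EuclideanSpace ℝ (Fin n) → Matrix (Fin n) (Fin n) ℝ)
    (hHess : ∀ y, HasFDerivAt (gradient f) (Matrix.toEuclideanCLM (𝕜 := ℝ) (Hess y)) y)
    (hPD : ∀ y, (Hess y).PosDef)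
    (R : Matrix (Fin p) (Fin n) ℝ) (hR : R.rank = p)
    (x d xp : EuclideanSpace ℝ (Fin n))
    (hd : d = -(Matrix.toEuclideanLin (Rᵀ * (R * Hess x * Rᵀ)⁻¹ * R) (gradient f x)))
    (hxp : xp = x + d)
    (G : Matrix (Fin n) (Fin n) ℝ)
    (hG : G = Matrix.of fun i j => ∫ t in (0:ℝ)..1, Hess (x + t • d) i j) :
    Matrix.toEuclideanLin R (gradient f xp) =
      -(Matrix.toEuclideanLin (R * (Hess x - G)) d) := by
  have hA : IsUnit (R * Hess x * Rᵀ).det := (isUnit_iff_isUnit_det _).mp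
    ((hPD x).mul_mul_transpose_of_rank_eq (hR.trans (Fintype.card_fin p).symm)).isUnit
  have hdir : WithLp.ofLp d = coarseDirection R (Hess x) (WithLp.ofLp (gradient f x)) := by
    rw [hd]
    rfl
  have hHess_cont : Continuous Hess :=
    continuous_of_hasFDerivAt_toEuclideanCLM (hf.contDiff_gradient one_add_one_eq_two.le) hHess
  have hGd : G *ᵥ WithLp.ofLp d = WithLp.ofLp (gradient f xp) - WithLp.ofLp (gradient f x) := by
    rw [hG, hxp]
    exact averagedJacobian_mulVec hHess hHess_cont x d
  apply WithLp.ofLp_injective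
  simp only [ofLp_toLpLin, WithLp.ofLp_neg, toLin'_apply]
  rw [← mulVec_mulVec, sub_mulVec, mulVec_sub, hGd, hdir, mulVec_mulVec_coarseDirection hA,
    mulVec_sub]
  abel

/-- Taylor-type identity for the coarse step: with
`d = −P(R∇²f(x)P)⁻¹R∇f(x)`, `x⁺ = x + d` and the averaged Hessian
`G = ∫₀¹ ∇²f(x + t d) dt` (entrywise), one has `R∇f(x⁺) = −R(∇²f(x) − G)d`. -/
theorem reduced_gradient_taylor_identity
    {n p : ℕ} (hp : p ≤ n)
    (f : EuclideanSpace ℝ (Fin n) → ℝ)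
    (hf : ContDiff ℝ 2 f)
    (Hess : EuclideanSpace ℝ (Fin n) → Matrix (Fin n) (Fin n) ℝ)
    (hHess : ∀ y, HasFDerivAt (gradient f) (Matrix.toEuclideanCLM (𝕜 := ℝ) (Hess y)) y)
    (hPD : ∀ y, (Hess y).PosDef)
    (R : Matrix (Fin p) (Fin n) ℝ) (hR : R.rank = p)
    (x d xp : EuclideanSpace ℝ (Fin n))
    (hd : d = -(Matrix.toEuclideanLin (Rᵀ * (R * Hess x * Rᵀ)⁻¹ * R) (gradient f x)))
    (hxp : xp = x + d)
    (G : Matrix (Fin n) (Fin n) ℝ)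
    (hG : G = Matrix.of fun i j => ∫ t in (0:ℝ)..1, Hess (x + t • d) i j) :
    Matrix.toEuclideanLin R (gradient f xp) =
      -(Matrix.toEuclideanLin (R * (Hess x - G)) d) :=
  reduced_gradient_taylor_identity_general f hf Hess hHess hPD R hR x d xp hd hxp G hG
end
end
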